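/- Let φ : Γ → ℂ be a function with φ(e) = 1. Suppose π is a unitary representation of G = Γ≀𝔖∞ on a complex Hilbert space H with a cyclic unit vector ξ such that ⟨π(sγ)ξ, ξ⟩ = φ_sp(sγ) = ∏_k φ(γ_k) for all s ∈ 𝔖∞ and γ ∈ Γ^∞_e. Then the subspace H^𝔖 = {η ∈ H : π(s)η = η for all s ∈ 𝔖∞} is one-dimensional, equal to ℂ·ξ; moreover π is irreducible: every bounded operator on H commuting with all π(g), g ∈ G, is a scalar multiple of the identity. -/

import Mathlib

open scoped Classical ComplexOrder
open Filter Topology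

noncomputable section

namespace DN

local notation "⟪" x ", " y "⟫" => @inner ℂ _ _ x y

/-- The group `𝔖∞` of finitely supported permutations of `ℕ`. -/
def SInf : Subgroup (Equiv.Perm ℕ) where
  carrier := {s | {i | s i ≠ i}.Finite}
  one_mem' := by simp
  mul_mem' := by
    intro s t hs ht
    refine Set.Finite.subset (hs.union ht) fun i hi => ?_
    simp only [Set.mem_setOf_eq, Set.mem_union, Equiv.Perm.mul_apply] at hi ⊢
    by_contra h
    push_neg at h
    rw [h.2, h.1] at hi
    exact hi rfl
  inv_mem' := by
    intro s hs
    refine Set.Finite.subset hs fun i hi => ?_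
    simp only [Set.mem_setOf_eq] at hi ⊢
    intro h
    exact hi (Equiv.Perm.inv_eq_iff_eq.mpr h.symm)

theorem mem_SInf (s : Equiv.Perm ℕ) : s ∈ SInf ↔ {i | s i ≠ i}.Finite := Iff.rfl

/-- The group `Γ^∞_e` of finitely supported sequences in `Γ`. -/
def GammaE (Γ : Type*) [Group Γ] : Subgroup (ℕ → Γ) where
  carrier := {γ | {i | γ i ≠ 1}.Finite}
  one_mem' := by simp
  mul_mem' := by
    intro f g hf hg
    refine Set.Finite.subset (hf.union hg) fun i hi => ?_
    simp only [Set.mem_setOf_eq, Set.mem_union, Pi.mul_apply] at hi ⊢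
    by_contra h
    push_neg at h
    rw [h.1, h.2] at hi
    exact hi (one_mul 1)
  inv_mem' := by
    intro f hf
    refine Set.Finite.subset hf fun i hi => ?_
    simp only [Set.mem_setOf_eq, Pi.inv_apply, ne_eq, inv_eq_one] at hi ⊢
    exact hi

theorem mem_GammaE {Γ : Type*} [Group Γ] (γ : ℕ → Γ) :
    γ ∈ GammaE Γ ↔ {i | γ i ≠ 1}.Finite := Iff.rfl

/-- The permutation action of `Equiv.Perm ℕ` on `ℕ → Γ`. -/
def permMulAut (Γ : Type*) [Group Γ] (s : Equiv.Perm ℕ) : MulAut (ℕ → Γ) where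
  toFun γ := γ ∘ s.symm
  invFun γ := γ ∘ s
  left_inv γ := by funext i; simp [Function.comp]
  right_inv γ := by funext i; simp [Function.comp]
  map_mul' γ δ := rfl

def permAction (Γ : Type*) [Group Γ] : Equiv.Perm ℕ →* MulAut (ℕ → Γ) where
  toFun := permMulAut Γ
  map_one' := by ext γ i; rfl
  map_mul' s t := by ext γ i; rfl

/-- The (big) wreath product `(ℕ → Γ) ⋊ Perm ℕ`. -/
abbrev W (Γ : Type*) [Group Γ] := (ℕ → Γ) ⋊[permAction Γ] Equiv.Perm ℕ

/-- The wreath product `G = Γ ≀ 𝔖∞`, as the subgroup of `W Γ` of finitely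
supported elements. -/
def WG (Γ : Type*) [Group Γ] : Subgroup (W Γ) where
  carrier := {g | {i | g.right i ≠ i}.Finite ∧ {i | g.left i ≠ 1}.Finite}
  one_mem' := by
    constructor
    · convert Set.finite_empty using 1
      ext i; simp
    · convert Set.finite_empty using 1
      ext i; simp
  mul_mem' := by
    rintro a b ⟨ha1, ha2⟩ ⟨hb1, hb2⟩
    constructor
    · refine Set.Finite.subset (ha1.union hb1) fun i hi => ?_
      simp only [Set.mem_setOf_eq, Set.mem_union, SemidirectProduct.mul_right,
        Equiv.Perm.mul_apply] at hi ⊢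
      by_contra h
      push_neg at h
      rw [h.2, h.1] at hi
      exact hi rfl
    · refine Set.Finite.subset (ha2.union (hb2.image a.right)) fun i hi => ?_
      simp only [Set.mem_setOf_eq, SemidirectProduct.mul_left, Pi.mul_apply] at hi
      by_contra h
      simp only [Set.mem_union, Set.mem_setOf_eq, Set.mem_image, not_or, not_exists,
        not_and, not_not] at h
      obtain ⟨h1, h2⟩ := h
      apply hi
      have hb : b.left (a.right⁻¹ i) = 1 := by
        by_contra hc
        exact h2 (a.right⁻¹ i) hc (by simp)
      have hrfl : (permAction Γ a.right b.left) i = b.left (a.right⁻¹ i) := rfl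
      rw [h1, one_mul, hrfl, hb]
  inv_mem' := by
    rintro a ⟨ha1, ha2⟩
    constructor
    · refine Set.Finite.subset ha1 fun i hi => ?_
      simp only [Set.mem_setOf_eq, SemidirectProduct.inv_right] at hi ⊢
      intro h
      exact hi (Equiv.Perm.inv_eq_iff_eq.mpr h.symm)
    · refine Set.Finite.subset (Set.Finite.preimage (a.right.injective.injOn) ha2)
        fun i hi => ?_
      simp only [Set.mem_setOf_eq] at hi
      simp only [Set.mem_preimage, Set.mem_setOf_eq]
      intro h
      apply hi
      have hrfl : (a⁻¹).left i = (a.left (a.right i))⁻¹ := rfl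
      rw [hrfl, h, inv_one]

theorem mem_WG {Γ : Type*} [Group Γ] (g : W Γ) :
    g ∈ WG Γ ↔ {i | g.right i ≠ i}.Finite ∧ {i | g.left i ≠ 1}.Finite := Iff.rfl

/-- The canonical copy of `𝔖∞` inside `Γ ≀ 𝔖∞`. -/
def permW {Γ : Type*} [Group Γ] (s : SInf) : WG Γ :=
  ⟨SemidirectProduct.inr s.1, by
    rw [mem_WG]
    constructor
    · have h : (SemidirectProduct.inr s.1 : W Γ).right = s.1 := SemidirectProduct.right_inr _
      rw [h]
      exact s.2
    · convert Set.finite_empty using 1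
      ext i; simp⟩

/-- The canonical copy of `Γ^∞_e` inside `Γ ≀ 𝔖∞`. -/
def seqW {Γ : Type*} [Group Γ] (γ : GammaE Γ) : WG Γ :=
  ⟨SemidirectProduct.inl γ.1, by
    rw [mem_WG]
    constructor
    · convert Set.finite_empty using 1
      ext i; simp
    · have h : (SemidirectProduct.inl γ.1 : W Γ).left = γ.1 := SemidirectProduct.left_inl _
      rw [h]
      exact γ.2⟩

/-- The support of an element of `Γ ≀ 𝔖∞`. -/
def supp {Γ : Type*} [Group Γ] (g : WG Γ) : Set ℕ :=
  {i | (g : W Γ).right i ≠ i ∨ (g : W Γ).left i ≠ 1}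

/-- Positive definiteness of a function on a group. -/
def IsPosDef {G : Type*} [Group G] (φ : G → ℂ) : Prop :=
  ∀ (m : ℕ) (g : Fin m → G) (c : Fin m → ℂ),
    0 ≤ ∑ i, ∑ j, c i * (starRingEnd ℂ) (c j) * φ ((g j)⁻¹ * g i)

/-- A state on a group: normalized positive definite function. -/
def IsState {G : Type*} [Group G] (φ : G → ℂ) : Prop := φ 1 = 1 ∧ IsPosDef φ

/-- `𝔖∞`-centrality of a function on `Γ ≀ 𝔖∞`. -/
def IsSCentral {Γ : Type*} [Group Γ] (φ : WG Γ → ℂ) : Prop :=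
  ∀ (s : SInf) (g : WG Γ), φ (permW s * g * (permW s)⁻¹) = φ g

/-- The commutant of a set of bounded operators. -/
def commutant {H : Type*} [NormedAddCommGroup H] [InnerProductSpace ℂ H]
    (S : Set (H →L[ℂ] H)) : Set (H →L[ℂ] H) := {T | ∀ A ∈ S, T * A = A * T}

variable {Γ : Type*} [Group Γ]
variable {H : Type*} [NormedAddCommGroup H] [InnerProductSpace ℂ H] [CompleteSpace H]

/-- The image set `π(G)` of a representation. -/
def repSet (π : WG Γ →* (H →L[ℂ] H)) : Set (H →L[ℂ] H) := Set.range fun g : WG Γ => π g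

/-- The von Neumann algebra `π(G)''` (double commutant). -/
def vN (π : WG Γ →* (H →L[ℂ] H)) : Set (H →L[ℂ] H) := commutant (commutant (repSet π))

/-- The representation is factorial: the center `π(G)' ∩ π(G)''` consists of scalars. -/
def IsFactorial (π : WG Γ →* (H →L[ℂ] H)) : Prop :=
  ∀ T ∈ commutant (repSet π) ∩ vN π, ∃ c : ℂ, T = c • (1 : H →L[ℂ] H)

/-- `(π, H, ξ)` is a GNS triple for `φ`. -/
structure IsGNS (φ : WG Γ → ℂ) (π : WG Γ →* (H →L[ℂ] H)) (ξ : H) : Prop where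
  unitary : ∀ g, π g ∈ unitary (H →L[ℂ] H)
  norm_one : ‖ξ‖ = 1
  cyclic : Dense ((Submodule.span ℂ (Set.range fun g : WG Γ => π g ξ) : Submodule ℂ H) : Set H)
  inner_eq : ∀ g, φ g = ⟪ξ, π g ξ⟫

theorem swap_mem_SInf (a b : ℕ) : Equiv.swap a b ∈ SInf := by
  rw [mem_SInf]
  refine Set.Finite.subset ((Set.finite_singleton a).insert b) fun i hi => ?_
  simp only [Set.mem_setOf_eq] at hi
  simp only [Set.mem_insert_iff, Set.mem_singleton_iff]
  by_contra h
  push_neg at h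
  exact hi (Equiv.swap_apply_of_ne_of_ne h.2 h.1)

/-- The transposition `(a b)` as an element of `Γ ≀ 𝔖∞`. -/
def swapW {Γ : Type*} [Group Γ] (a b : ℕ) : WG Γ := permW ⟨Equiv.swap a b, swap_mem_SInf a b⟩

def omegaFun (n i : ℕ) : ℕ := if i < n then i + n else if i < 2 * n then i - n else i

theorem omegaFun_invol (n i : ℕ) : omegaFun n (omegaFun n i) = i := by
  unfold omegaFun
  split_ifs <;> first | contradiction | omega

/-- Olshanski's permutation `ω_n`. -/
def omegaPerm (n : ℕ) : Equiv.Perm ℕ :=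
  ⟨omegaFun n, omegaFun n, omegaFun_invol n, omegaFun_invol n⟩

theorem omegaPerm_mem (n : ℕ) : omegaPerm n ∈ SInf := by
  rw [mem_SInf]
  refine Set.Finite.subset (Set.finite_Iio (2 * n)) fun i hi => ?_
  simp only [Set.mem_setOf_eq] at hi
  simp only [Set.mem_Iio]
  by_contra h
  push_neg at h
  apply hi
  show omegaFun n i = i
  unfold omegaFun
  split_ifs <;> first | contradiction | omega

/-- `ω_n` as an element of `Γ ≀ 𝔖∞`. -/
def omegaW {Γ : Type*} [Group Γ] (n : ℕ) : WG Γ := permW ⟨omegaPerm n, omegaPerm_mem n⟩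

def sigmaFun (n i : ℕ) : ℕ := if i + 1 < n then i + 1 else if i + 1 = n then 0 else i

def sigmaInvFun (n i : ℕ) : ℕ := if i < n then (if i = 0 then n - 1 else i - 1) else i

theorem sigma_left_inv (n i : ℕ) : sigmaInvFun n (sigmaFun n i) = i := by
  unfold sigmaFun sigmaInvFun
  split_ifs <;> first | contradiction | omega

theorem sigma_right_inv (n i : ℕ) : sigmaFun n (sigmaInvFun n i) = i := by
  unfold sigmaFun sigmaInvFun
  split_ifs <;> first | contradiction | omega

/-- The cycle `σ_n = (0 1 2 ... n-1)`. -/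
def sigmaPerm (n : ℕ) : Equiv.Perm ℕ :=
  ⟨sigmaFun n, sigmaInvFun n, sigma_left_inv n, sigma_right_inv n⟩

theorem sigmaPerm_mem (n : ℕ) : sigmaPerm n ∈ SInf := by
  rw [mem_SInf]
  refine Set.Finite.subset (Set.finite_Iio n) fun i hi => ?_
  simp only [Set.mem_setOf_eq] at hi
  simp only [Set.mem_Iio]
  by_contra h
  push_neg at h
  apply hi
  show sigmaFun n i = i
  unfold sigmaFun
  split_ifs <;> first | contradiction | omega

/-- The cycle of `s` through the point `i` (the paper's `s_p` for the orbit `p` of `i`). -/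
def cycleAt (s : Equiv.Perm ℕ) (i : ℕ) : Equiv.Perm ℕ where
  toFun j := if s.SameCycle i j then s j else j
  invFun j := if s.SameCycle i j then s⁻¹ j else j
  left_inv j := by
    by_cases h : s.SameCycle i j
    · have h2 : s.SameCycle i (s j) := Equiv.Perm.sameCycle_apply_right.mpr h
      simp [h, h2]
    · simp [h]
  right_inv j := by
    by_cases h : s.SameCycle i j
    · have h2 : s.SameCycle i (s⁻¹ j) := Equiv.Perm.sameCycle_symm_apply_right.mpr h
      simp [h, h2]
    · simp [h]

theorem cycleAt_mem {s : Equiv.Perm ℕ} (hs : s ∈ SInf) (i : ℕ) : cycleAt s i ∈ SInf := by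
  rw [mem_SInf] at hs ⊢
  refine Set.Finite.subset hs fun j hj => ?_
  simp only [Set.mem_setOf_eq] at hj ⊢
  intro h
  apply hj
  show (if s.SameCycle i j then s j else j) = j
  split_ifs with hc
  · exact h
  · rfl

/-- The generalized cycle of `g = sγ` corresponding to the orbit of `i` under `s`. -/
def genCycle {Γ : Type*} [Group Γ] (g : WG Γ) (i : ℕ) : WG Γ :=
  permW ⟨cycleAt (g : W Γ).right i, cycleAt_mem g.2.1 i⟩ *
  seqW ⟨fun k => if ((g : W Γ).right).SameCycle i k then (g : W Γ).left ((g : W Γ).right k)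
      else 1, by
    rw [mem_GammaE]
    refine Set.Finite.subset (Set.Finite.preimage ((g : W Γ).right.injective.injOn) g.2.2)
      fun k hk => ?_
    simp only [Set.mem_setOf_eq] at hk
    simp only [Set.mem_preimage, Set.mem_setOf_eq]
    by_cases hsc : ((g : W Γ).right).SameCycle i k
    · rw [if_pos hsc] at hk; exact hk
    · rw [if_neg hsc] at hk; exact absurd rfl hk⟩

/-- The von Neumann algebra `𝔄_j` generated by `O_j` and the `π(γ)` with `γ` supported at `j`. -/
def Aj (π : WG Γ →* (H →L[ℂ] H)) (O : H →L[ℂ] H) (j : ℕ) : Set (H →L[ℂ] H) :=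
  commutant (commutant
    ({O} ∪ {T | ∃ γ : GammaE Γ, (∀ i, i ≠ j → (γ : ℕ → Γ) i = 1) ∧ T = π (seqW γ)}))

/-! `ξ` is `𝔖∞`-fixed, since `⟪ξ, π s ξ⟫ = φ_sp s = 1`. Let `η` be another `𝔖∞`-fixed vector
and `g ∈ G`. Conjugating `g` by permutations `s_n` that move its support into pairwise disjoint
blocks, and using that `φ_sp` is multiplicative on disjointly supported elements, the vectors
`π(s_n g s_n⁻¹) ξ - ⟪ξ, π g ξ⟫ ξ` form a bounded orthogonal sequence whose inner products with `η`
do not depend on `n`; hence these inner products vanish, i.e.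
`⟪η, π g ξ⟫ = ⟪ξ, π g ξ⟫ ⟪η, ξ⟫`, and cyclicity of `ξ` gives `η = ⟪ξ, η⟫ ξ`. An operator `T`
commuting with `π` maps `ξ` to a fixed vector `c ξ`, and by cyclicity again `T = c`. -/

section Hilbert

variable {𝕜 E : Type*} [RCLike 𝕜] [NormedAddCommGroup E] [InnerProductSpace 𝕜 E]

theorem norm_sum_range_sq_le_of_pairwise_inner_eq_zero {u : ℕ → E} {C : ℝ}
    (horth : Pairwise fun n m => inner 𝕜 (u n) (u m) = 0) (hC : ∀ n, ‖u n‖ ≤ C) (M : ℕ) :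
    ‖∑ n ∈ Finset.range M, u n‖ ^ 2 ≤ M * C ^ 2 := by
  induction M with
  | zero => simp
  | succ M ih =>
    have hperp : inner 𝕜 (∑ n ∈ Finset.range M, u n) (u M) = 0 := by
      rw [sum_inner]
      exact Finset.sum_eq_zero fun n hn => horth (Finset.mem_range.mp hn).ne
    have hM : ‖u M‖ ^ 2 ≤ C ^ 2 := pow_le_pow_left₀ (norm_nonneg _) (hC M) 2
    rw [Finset.sum_range_succ, sq, norm_add_sq_eq_norm_sq_add_norm_sq_of_inner_eq_zero _ _ hperp,
      ← sq, ← sq]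
    push_cast
    linarith

theorem eq_zero_of_inner_eq_of_pairwise_inner_eq_zero {u : ℕ → E} {C : ℝ} {η : E} {d : 𝕜}
    (horth : Pairwise fun n m => inner 𝕜 (u n) (u m) = 0) (hC : ∀ n, ‖u n‖ ≤ C)
    (hd : ∀ n, inner 𝕜 η (u n) = d) : d = 0 := by
  have hbound : ∀ M : ℕ, (M : ℝ) * ‖d‖ ^ 2 ≤ ‖η‖ ^ 2 * C ^ 2 := by
    intro M
    set S := ∑ n ∈ Finset.range M, u n
    have hS : ‖S‖ ^ 2 ≤ M * C ^ 2 :=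
      norm_sum_range_sq_le_of_pairwise_inner_eq_zero horth hC M
    have hCS : (M : ℝ) * ‖d‖ ≤ ‖η‖ * ‖S‖ := by
      have h := norm_inner_le_norm (𝕜 := 𝕜) η S
      rwa [inner_sum, Finset.sum_congr rfl fun n _ => hd n, Finset.sum_const,
        Finset.card_range, nsmul_eq_mul, norm_mul, RCLike.norm_natCast] at h
    have hsq : ((M : ℝ) * ‖d‖) ^ 2 ≤ ‖η‖ ^ 2 * (M * C ^ 2) := by
      calc ((M : ℝ) * ‖d‖) ^ 2 ≤ (‖η‖ * ‖S‖) ^ 2 := by gcongr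
        _ = ‖η‖ ^ 2 * ‖S‖ ^ 2 := by ring
        _ ≤ ‖η‖ ^ 2 * (M * C ^ 2) := by gcongr
    rcases Nat.eq_zero_or_pos M with rfl | hM
    · simp only [Nat.cast_zero, zero_mul]
      positivity
    · have hM' : (0 : ℝ) < M := by exact_mod_cast hM
      nlinarith
  by_contra hne
  have hpos : 0 < ‖d‖ ^ 2 := by positivity
  obtain ⟨M, hM⟩ := exists_nat_gt (‖η‖ ^ 2 * C ^ 2 / ‖d‖ ^ 2)
  rw [div_lt_iff₀ hpos] at hM
  linarith [hbound M]

theorem inner_eq_mul_inner_of_pairwise_inner {ξ η : E} {v : ℕ → E} {C : ℝ} {a b : 𝕜}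
    (hξ : ‖ξ‖ = 1) (hC : ∀ n, ‖v n‖ ≤ C) (hξv : ∀ n, inner 𝕜 ξ (v n) = a)
    (hvv : Pairwise fun n m => inner 𝕜 (v n) (v m) = starRingEnd 𝕜 a * a)
    (hηv : ∀ n, inner 𝕜 η (v n) = b) : b = a * inner 𝕜 η ξ := by
  have hξξ : inner 𝕜 ξ ξ = (1 : 𝕜) := by simp [inner_self_eq_norm_sq_to_K, hξ]
  have hvξ : ∀ n, inner 𝕜 (v n) ξ = starRingEnd 𝕜 a := fun n => by
    rw [← inner_conj_symm, hξv]
  refine sub_eq_zero.mp (eq_zero_of_inner_eq_of_pairwise_inner_eq_zero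
    (u := fun n => v n - a • ξ) (C := C + ‖a‖) (η := η) ?_ ?_ ?_)
  · intro n m hnm
    simp only [inner_sub_left, inner_sub_right, inner_smul_left, inner_smul_right, hvv hnm,
      hξv, hvξ, hξξ]
    ring
  · intro n
    calc ‖v n - a • ξ‖ ≤ ‖v n‖ + ‖a • ξ‖ := norm_sub_le _ _
      _ ≤ C + ‖a‖ := by rw [norm_smul, hξ, mul_one]; linarith [hC n]
  · intro n
    simp only [inner_sub_right, inner_smul_right, hηv]

theorem eq_of_inner_eq_of_dense_span {S : Set E} (hS : Dense (Submodule.span 𝕜 S : Set E))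
    {x y : E} (h : ∀ v ∈ S, inner 𝕜 x v = inner 𝕜 y v) : x = y := by
  have hfun : innerSL 𝕜 x = innerSL 𝕜 y := ContinuousLinearMap.ext_on hS h
  exact ext_inner_right 𝕜 fun v => congr($hfun v)

end Hilbert

section UnitaryRepresentation

variable {𝕜 E G : Type*} [RCLike 𝕜] [NormedAddCommGroup E] [InnerProductSpace 𝕜 E] [Group G]

theorem eq_smul_one_of_commute_of_dense_span {π : G →* (E →L[𝕜] E)} {ξ : E}
    (hξ : Dense (Submodule.span 𝕜 (Set.range fun g => π g ξ) : Set E)) {T : E →L[𝕜] E}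
    (hT : ∀ g, T * π g = π g * T) {c : 𝕜} (hTξ : T ξ = c • ξ) : T = c • 1 := by
  refine ContinuousLinearMap.ext_on hξ ?_
  rintro _ ⟨g, rfl⟩
  rw [← mul_apply_eq_comp, hT, mul_apply_eq_comp, hTξ, map_smul]
  rfl

theorem map_inv_apply_eq {π : G →* (E →L[𝕜] E)} {s : G} {x : E} (hx : π s x = x) :
    π s⁻¹ x = x := by
  conv_lhs => rw [← hx]
  rw [← mul_apply_eq_comp, ← map_mul, inv_mul_cancel, map_one, one_apply_eq_self]

variable [CompleteSpace E]

theorem inner_map_inv_apply {π : G →* (E →L[𝕜] E)} (hπ : ∀ g, π g ∈ unitary (E →L[𝕜] E))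
    (g : G) (x y : E) : inner 𝕜 x (π g⁻¹ y) = inner 𝕜 (π g x) y := by
  rw [← ContinuousLinearMap.inner_map_map_of_mem_unitary (hπ g), ← mul_apply_eq_comp, ← map_mul,
    mul_inv_cancel, map_one, one_apply_eq_self]

theorem inner_map_conj_of_map_eq {π : G →* (E →L[𝕜] E)}
    (hπ : ∀ g, π g ∈ unitary (E →L[𝕜] E)) {s : G} {η ξ : E} (hη : π s η = η) (hξ : π s ξ = ξ)
    (g : G) : inner 𝕜 η (π (s * g * s⁻¹) ξ) = inner 𝕜 η (π g ξ) := by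
  rw [map_mul, map_mul, mul_apply_eq_comp, mul_apply_eq_comp, map_inv_apply_eq hξ, ← inv_inv s,
    inner_map_inv_apply hπ, map_inv_apply_eq hη]

end UnitaryRepresentation

section WreathProduct

theorem permAction_apply (s : Equiv.Perm ℕ) (γ : ℕ → Γ) (i : ℕ) :
    permAction Γ s γ i = γ (s⁻¹ i) := rfl

theorem coe_permW (s : SInf) : ((permW s : WG Γ) : W Γ) = SemidirectProduct.inr s.1 := rfl

theorem permW_inv (s : SInf) : (permW s : WG Γ)⁻¹ = permW s⁻¹ :=
  Subtype.ext (map_inv SemidirectProduct.inr s.1).symm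

theorem exists_eq_permW_mul_seqW (g : WG Γ) :
    ∃ (s : SInf) (γ : GammaE Γ), g = permW s * seqW γ := by
  refine ⟨⟨(g : W Γ).right, g.2.1⟩,
    ⟨fun k => (g : W Γ).left ((g : W Γ).right k), g.2.2.preimage (g : W Γ).right.injective.injOn⟩,
    Subtype.ext ?_⟩
  ext i
  · simp [permW, seqW, permAction_apply]
  · simp [permW, seqW]

theorem mem_supp_conj_iff (s : SInf) (g : WG Γ) (i : ℕ) :
    i ∈ supp (permW s * g * (permW s)⁻¹) ↔ s.1⁻¹ i ∈ supp g := by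
  rw [permW_inv]
  simp only [supp, Set.mem_ofPred_eq, Subgroup.coe_mul, coe_permW, SemidirectProduct.mul_right,
    SemidirectProduct.mul_left, SemidirectProduct.right_inr, SemidirectProduct.left_inr, map_one,
    one_mul, mul_one, InvMemClass.coe_inv, permAction_apply]
  rw [Equiv.Perm.mul_apply, Equiv.Perm.mul_apply, Ne, ← Equiv.Perm.eq_inv_iff_eq]

theorem supp_inv_subset (g : WG Γ) : supp g⁻¹ ⊆ supp g := by
  intro i hi
  change (g : W Γ).right⁻¹ i ≠ i ∨ ((g : W Γ).left ((g : W Γ).right i))⁻¹ ≠ 1 at hi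
  by_cases hfix : (g : W Γ).right i = i
  · rw [hfix, inv_ne_one] at hi
    exact Or.inr (hi.resolve_left (by rw [not_ne_iff, Equiv.Perm.inv_eq_iff_eq, hfix]))
  · exact Or.inl hfix

theorem left_mul_of_disjoint {g h : WG Γ} (hd : Disjoint (supp g) (supp h)) (k : ℕ) :
    ((g * h : WG Γ) : W Γ).left k = (g : W Γ).left k * (h : W Γ).left k := by
  change (g : W Γ).left k * (h : W Γ).left ((g : W Γ).right⁻¹ k) = _
  have hh : ∀ j ∈ supp g, (h : W Γ).left j = 1 := fun j hj =>
    not_not.mp fun hne => hd.ne_of_mem hj (Or.inr hne) rfl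
  by_cases hk : k ∈ supp g
  · have hk' : (g : W Γ).right⁻¹ k ∈ supp g := by
      by_cases he : (g : W Γ).right⁻¹ k = k
      · rwa [he]
      · exact Or.inl (by rwa [Equiv.Perm.coe_inv, Equiv.apply_symm_apply, ne_comm])
    rw [hh k hk, hh _ hk']
  · have hfix : (g : W Γ).right k = k ∧ (g : W Γ).left k = 1 := by
      simpa [supp, not_or] using hk
    rw [hfix.2, Equiv.Perm.inv_eq_iff_eq.mpr hfix.1.symm]

theorem supp_finite (g : WG Γ) : (supp g).Finite := g.2.1.union g.2.2

def blockSwap (N n : ℕ) : Equiv.Perm ℕ :=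
  Function.Involutive.toPerm
    (fun i => if i < N then i + n * N else if n * N ≤ i ∧ i < n * N + N then i - n * N else i)
    (by
      intro i
      have : n * N = 0 ∨ N ≤ n * N := (Nat.eq_zero_or_pos n).imp (by simp [·])
        (Nat.le_mul_of_pos_left N)
      dsimp only
      split_ifs <;> omega)

theorem blockSwap_apply_of_lt {N i : ℕ} (n : ℕ) (hi : i < N) : blockSwap N n i = i + n * N :=
  if_pos hi

theorem blockSwap_mem (N n : ℕ) : blockSwap N n ∈ SInf := by
  refine (Set.finite_Iio (n * N + N)).subset fun i hi => ?_
  by_contra hlt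
  simp only [Set.mem_Iio, not_lt] at hlt
  apply hi
  change ite _ _ _ = i
  split_ifs <;> omega

theorem exists_conj_pairwise_disjoint_supp (g : WG Γ) :
    ∃ s : ℕ → SInf, Pairwise fun n m => Disjoint (supp (permW (s n) * g * (permW (s n))⁻¹))
      (supp (permW (s m) * g * (permW (s m))⁻¹)) := by
  obtain ⟨N, hN⟩ := (supp_finite g).bddAbove
  let s : ℕ → SInf := fun n => ⟨blockSwap (N + 1) n, blockSwap_mem _ n⟩
  have hblock : ∀ n, supp (permW (s n) * g * (permW (s n))⁻¹) ⊆ (· / (N + 1)) ⁻¹' {n} := by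
    intro n i hi
    obtain ⟨j, rfl⟩ := (s n).1.surjective i
    rw [mem_supp_conj_iff, Equiv.Perm.coe_inv, Equiv.symm_apply_apply] at hi
    have hj : j < N + 1 := Nat.lt_succ_of_le (hN hi)
    rw [Set.mem_preimage, Set.mem_singleton_iff, blockSwap_apply_of_lt n hj,
      Nat.add_mul_div_right _ _ N.succ_pos, Nat.div_eq_of_lt hj, zero_add]
  exact ⟨s, (pairwise_disjoint_fiber _).mono fun n m h => h.mono (hblock n) (hblock m)⟩

end WreathProduct

section Spherical

/-- The paper's `φ_sp`. For `g = s γ` the left component of `g` is `γ ∘ s⁻¹`, a reindexing of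
`γ`, whence `phiSp_permW_mul_seqW`. -/
def phiSp (φ : Γ → ℂ) (g : WG Γ) : ℂ := ∏ᶠ k, φ ((g : W Γ).left k)

variable {φ : Γ → ℂ}

theorem phiSp_permW_mul_seqW (s : SInf) (γ : GammaE Γ) :
    phiSp φ (permW s * seqW γ) = ∏ᶠ k, φ ((γ : ℕ → Γ) k) := by
  change ∏ᶠ k, φ ((1 * permAction Γ s.1 γ.1) k) = _
  simp only [one_mul, permAction_apply]
  exact finprod_comp_equiv s.1⁻¹ (f := fun k => φ ((γ : ℕ → Γ) k))

theorem phiSp_permW (hφ : φ 1 = 1) (s : SInf) : phiSp φ (permW s) = 1 := by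
  simp [phiSp, coe_permW, hφ]

theorem phiSp_mul_of_disjoint (hφ : φ 1 = 1) {g h : WG Γ} (hd : Disjoint (supp g) (supp h)) :
    phiSp φ (g * h) = phiSp φ g * phiSp φ h := by
  have hfin : ∀ x : WG Γ, (Function.mulSupport fun k => φ ((x : W Γ).left k)).Finite :=
    fun x => x.2.2.subset fun k hk hx => hk (by simp [hx, hφ])
  unfold phiSp
  rw [← finprod_mul_distrib (hfin g) (hfin h)]
  refine finprod_congr fun k => ?_
  rw [left_mul_of_disjoint hd]
  by_cases hg : (g : W Γ).left k = 1
  · rw [hg, one_mul, hφ, one_mul]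
  · have hh : (h : W Γ).left k = 1 :=
      not_not.mp fun hne => hd.ne_of_mem (Or.inr hg) (Or.inr hne) rfl
    rw [hh, mul_one, hφ, mul_one]

end Spherical

section SphericalRepresentation

variable {E : Type*} [NormedAddCommGroup E] [InnerProductSpace ℂ E] {π : WG Γ →* (E →L[ℂ] E)}
  {ξ : E}

theorem inner_map_eq_phiSp {φ : Γ → ℂ}
    (hrep : ∀ (s : SInf) (γ : GammaE Γ), ⟪ξ, π (permW s * seqW γ) ξ⟫ = ∏ᶠ k, φ ((γ : ℕ → Γ) k))
    (g : WG Γ) : ⟪ξ, π g ξ⟫ = phiSp φ g := by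
  obtain ⟨s, γ, rfl⟩ := exists_eq_permW_mul_seqW g
  rw [hrep, phiSp_permW_mul_seqW]

variable [CompleteSpace E]

theorem map_permW_apply_eq_self {φ : Γ → ℂ} (hφ : φ 1 = 1)
    (hπ : ∀ g, π g ∈ unitary (E →L[ℂ] E)) (hξ : ‖ξ‖ = 1)
    (hrep : ∀ (s : SInf) (γ : GammaE Γ), ⟪ξ, π (permW s * seqW γ) ξ⟫ = ∏ᶠ k, φ ((γ : ℕ → Γ) k))
    (s : SInf) : π (permW s) ξ = ξ := by
  have hnorm : ‖π (permW s) ξ‖ = 1 :=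
    (ContinuousLinearMap.norm_map_of_mem_unitary (hπ (permW s)) ξ).trans hξ
  refine ((inner_eq_one_iff_of_norm_eq_one (𝕜 := ℂ) hξ hnorm).mp ?_).symm
  rw [inner_map_eq_phiSp hrep, phiSp_permW hφ]

theorem inner_map_eq_mul_of_map_permW_eq (hπ : ∀ g, π g ∈ unitary (E →L[ℂ] E)) (hξ : ‖ξ‖ = 1)
    (hξfix : ∀ s, π (permW s) ξ = ξ)
    (hmul : ∀ g h : WG Γ, Disjoint (supp g) (supp h) → ⟪ξ, π (g * h) ξ⟫ = ⟪ξ, π g ξ⟫ * ⟪ξ, π h ξ⟫)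
    {η : E} (hη : ∀ s, π (permW s) η = η) (g : WG Γ) :
    ⟪η, π g ξ⟫ = ⟪ξ, π g ξ⟫ * ⟪η, ξ⟫ := by
  obtain ⟨s, hs⟩ := exists_conj_pairwise_disjoint_supp g
  set h : ℕ → WG Γ := fun n => permW (s n) * g * (permW (s n))⁻¹
  refine inner_eq_mul_inner_of_pairwise_inner (v := fun n => π (h n) ξ) (C := 1) hξ
    (fun n => ((ContinuousLinearMap.norm_map_of_mem_unitary (hπ (h n)) ξ).trans hξ).le)
    (fun n => inner_map_conj_of_map_eq hπ (hξfix _) (hξfix _) g) ?_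
    (fun n => inner_map_conj_of_map_eq hπ (hη _) (hξfix _) g)
  intro n m hnm
  calc ⟪π (h n) ξ, π (h m) ξ⟫ = ⟪ξ, π (h n)⁻¹ (π (h m) ξ)⟫ := (inner_map_inv_apply hπ _ _ _).symm
    _ = ⟪ξ, π (h n)⁻¹ ξ⟫ * ⟪ξ, π (h m) ξ⟫ := by
      rw [← mul_apply_eq_comp, ← map_mul, hmul _ _ ((hs hnm).mono_left (supp_inv_subset _))]
    _ = starRingEnd ℂ ⟪ξ, π g ξ⟫ * ⟪ξ, π g ξ⟫ := by
      rw [inner_map_inv_apply hπ, ← inner_conj_symm,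
        inner_map_conj_of_map_eq hπ (hξfix _) (hξfix _),
        inner_map_conj_of_map_eq hπ (hξfix _) (hξfix _)]

theorem setOf_map_permW_eq_self_eq_span (hπ : ∀ g, π g ∈ unitary (E →L[ℂ] E)) (hξ : ‖ξ‖ = 1)
    (hcyclic : Dense (Submodule.span ℂ (Set.range fun g : WG Γ => π g ξ) : Set E))
    (hξfix : ∀ s, π (permW s) ξ = ξ)
    (hmul : ∀ g h : WG Γ, Disjoint (supp g) (supp h) → ⟪ξ, π (g * h) ξ⟫ = ⟪ξ, π g ξ⟫ * ⟪ξ, π h ξ⟫) :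
    {η : E | ∀ s : SInf, π (permW s) η = η} = (Submodule.span ℂ ({ξ} : Set E) : Set E) := by
  ext η
  refine ⟨fun hη => ?_, fun hη s => ?_⟩
  · have hη_eq : η = ⟪ξ, η⟫ • ξ := eq_of_inner_eq_of_dense_span hcyclic <| by
      rintro _ ⟨g, rfl⟩
      rw [inner_smul_left, inner_conj_symm,
        inner_map_eq_mul_of_map_permW_eq hπ hξ hξfix hmul hη, mul_comm]
    rw [SetLike.mem_coe, hη_eq]
    exact Submodule.smul_mem _ _ (Submodule.mem_span_singleton_self ξ)
  · obtain ⟨c, rfl⟩ := Submodule.mem_span_singleton.mp hη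
    rw [map_smul, hξfix]

end SphericalRepresentation

theorem statement_2 {Γ : Type*} [Group Γ] {H : Type*} [NormedAddCommGroup H]
    [InnerProductSpace ℂ H] [CompleteSpace H]
    (φ : Γ → ℂ) (hφone : φ 1 = 1)
    (π : WG Γ →* (H →L[ℂ] H)) (ξ : H)
    (hunit : ∀ g, π g ∈ unitary (H →L[ℂ] H))
    (hnorm : ‖ξ‖ = 1)
    (hcyclic :
      Dense ((Submodule.span ℂ (Set.range fun g : WG Γ => π g ξ) : Submodule ℂ H) : Set H))
    (hrep : ∀ (s : SInf) (γ : GammaE Γ),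
      ⟪ξ, π (permW s * seqW γ) ξ⟫ = ∏ᶠ k, φ ((γ : ℕ → Γ) k)) :
    {η : H | ∀ s : SInf, π (permW s) η = η} = (Submodule.span ℂ ({ξ} : Set H) : Set H) ∧
    ∀ T : H →L[ℂ] H, (∀ g : WG Γ, T * π g = π g * T) →
      ∃ c : ℂ, T = c • (1 : H →L[ℂ] H) := by
  have hfix := map_permW_apply_eq_self hφone hunit hnorm hrep
  have hmul : ∀ g h : WG Γ, Disjoint (supp g) (supp h) →
      ⟪ξ, π (g * h) ξ⟫ = ⟪ξ, π g ξ⟫ * ⟪ξ, π h ξ⟫ := by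
    simp only [inner_map_eq_phiSp hrep]
    exact fun g h hd => phiSp_mul_of_disjoint hφone hd
  have hinv := setOf_map_permW_eq_self_eq_span hunit hnorm hcyclic hfix hmul
  refine ⟨hinv, fun T hT => ?_⟩
  have hTξ : T ξ ∈ {η : H | ∀ s : SInf, π (permW s) η = η} := fun s => by
    rw [← mul_apply_eq_comp, ← hT, mul_apply_eq_comp, hfix]
  rw [hinv, SetLike.mem_coe, Submodule.mem_span_singleton] at hTξ
  obtain ⟨c, hc⟩ := hTξ
  exact ⟨c, eq_smul_one_of_commute_of_dense_span hcyclic hT hc.symm⟩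

end DN
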